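/- Let α ∈ ℂ and let P be a polynomial with complex coefficients in the variables λ, x₁, x₂, … (only finitely many occurring). Consider the system of equations (1/k!)·∂^kP/∂λ^k = α·∂P/∂x_k for all k ≥ 1. (a) If α = 0, then P satisfies the system if and only if P is independent of λ. (b) If α ≠ 0, β = 1/α, and P is homogeneous of degree d ≥ 1 for the grading deg λ = 1, deg x_k = k, then P satisfies the system if and only if P = δ·(M_λ + T + β·M_{x₁})^d(1) for some δ ∈ ℂ, where T is the derivation of ℂ[λ,x₁,x₂,…] determined by T(λ) = 0 and T(x_k) = x_{k+1}, M_λ and M_{x₁} denote multiplication by λ and by x₁, and the operator M_λ + T + β·M_{x₁} is applied d times to the constant polynomial 1. -/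

import Mathlib

/-!
Write `D = ∂/∂λ` and `L = M_λ + T + β·M_{x₁}`. From `[∂_k, T] = ∂_{k-1}` for `k ≥ 2` and
`[∂₀, T] = [∂₁, T] = 0` one gets `[D, L] = 1`, `[∂₁, L] = β` and `[∂_k, L] = ∂_{k-1}` for
`k ≥ 2`, hence `Dᵏ L = L Dᵏ + k Dᵏ⁻¹`. With these, induction on `d` shows that `Q_d = Lᵈ 1`
satisfies `Dᵏ Q_d = k! α ∂_k Q_d` when `αβ = 1`.

Conversely, `D` maps solutions of weight `d` to solutions of weight `d - 1`, and
`D Q_d = d Q_{d-1}`. By induction `D P = δ' Q_{d-1}`, so `R = P - (δ'/d) Q_d` is a solution with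
`D R = 0`. The system then forces `∂_k R = 0` for every `k ≥ 1`, so in characteristic zero `R` is
constant, hence zero, being homogeneous of positive weight. For `α = 0` the system just says
`∂P/∂λ = 0`.
-/
open MvPolynomial

/- We work in `ℂ[λ,x₁,x₂,…] = MvPolynomial ℕ ℂ`, where `X 0 = λ` and `X k = x_k` for `k ≥ 1`. -/

/-- The derivation `T` of `ℂ[λ,x₁,x₂,…]` with `T(λ) = 0` and `T(x_k) = x_{k+1}`. -/
noncomputable def Tx : Derivation ℂ (MvPolynomial ℕ ℂ) (MvPolynomial ℕ ℂ) :=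
  MvPolynomial.mkDerivation ℂ fun k => if k = 0 then 0 else X (k + 1)

namespace MvPolynomial

variable {σ R M : Type*} [CommSemiring R] {w : σ → M}

theorem IsWeightedHomogeneous.derivation [AddCommMonoid M]
    {D : Derivation R (MvPolynomial σ R) (MvPolynomial σ R)} {m n : M}
    (hD : ∀ i, (D (X i)).IsWeightedHomogeneous w (w i + m)) {p : MvPolynomial σ R}
    (hp : p.IsWeightedHomogeneous w n) : (D p).IsWeightedHomogeneous w (n + m) := by
  have hD' : D = mkDerivation R fun i => D (X i) :=
    derivation_ext fun i => by simp
  induction hp using IsWeightedHomogeneous.induction_on with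
  | zero => simpa using isWeightedHomogeneous_zero R w _
  | add p q _ _ hp hq => simpa using hp.add hq
  | monomial d r hd =>
    rw [hD', mkDerivation_monomial, smul_eq_C_mul, Finsupp.sum]
    refine .C_mul (.sum _ _ _ fun i hi => ?_) r
    have hdi : Finsupp.weight w (d - Finsupp.single i 1) + w i = n :=
      hd ▸ Finsupp.weight_sub_single_add (Finsupp.mem_support_iff.mp hi)
    have := (isWeightedHomogeneous_monomial w (d - Finsupp.single i 1) (d i : R) rfl).mul (hD i)
    rwa [← add_assoc, hdi, ← smul_eq_mul] at this

theorem pderiv_pderiv_comm (i j : σ) (p : MvPolynomial σ R) :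
    pderiv i (pderiv j p) = pderiv j (pderiv i p) := by
  classical
  induction p using MvPolynomial.induction_on with
  | C a => simp
  | add p q hp hq => simp only [map_add, hp, hq]
  | mul_X p k ih =>
    simp only [pderiv_mul, map_add, ih, pderiv_X, Pi.single_apply, apply_ite (pderiv _),
      pderiv_one, map_zero]
    split_ifs <;> ring

variable [NoZeroDivisors R] [CharZero R]

theorem pderiv_eq_zero_iff_notMem_vars {i : σ} {p : MvPolynomial σ R} :
    pderiv i p = 0 ↔ i ∉ p.vars := by
  refine ⟨fun h hi => ?_, pderiv_eq_zero_of_notMem_vars⟩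
  obtain ⟨s, hs, hsi⟩ := (mem_vars_iff_mem_support i).mp hi
  have hle : Finsupp.single i 1 ≤ s :=
    Finsupp.single_le_iff.mpr (Nat.one_le_iff_ne_zero.mpr (Finsupp.mem_support_iff.mp hsi))
  have := coeff_pderiv (i := i) p (s - Finsupp.single i 1)
  rw [h, coeff_zero, tsub_add_cancel_of_le hle] at this
  exact mem_support_iff.mp hs
    ((mul_eq_zero.mp this.symm).resolve_right (Nat.cast_add_one_ne_zero _))

theorem eq_C_of_forall_pderiv_eq_zero {p : MvPolynomial σ R} (h : ∀ i, pderiv i p = 0) :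
    p = C (p.coeff 0) :=
  vars_eq_empty_iff_eq_C.mp
    (Finset.eq_empty_of_forall_notMem fun i => pderiv_eq_zero_iff_notMem_vars.mp (h i))

end MvPolynomial

section Weyl

variable {A : Type*} [Semiring A] {a b : A}

theorem pow_succ_mul_eq_of_mul_eq (h : a * b = b * a + 1) (n : ℕ) :
    a ^ (n + 1) * b = b * a ^ (n + 1) + (n + 1) * a ^ n := by
  induction n with
  | zero => simpa using h
  | succ n ih =>
    rw [pow_succ', mul_assoc, ih, mul_add, ← mul_assoc, h, ← mul_assoc a,
      ← ((Nat.cast_commute n a).add_left (Commute.one_left a)).eq]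
    push_cast
    simp only [add_mul, one_mul, mul_assoc, pow_succ']
    abel

theorem mul_pow_succ_eq_of_mul_eq (h : a * b = b * a + 1) (n : ℕ) :
    a * b ^ (n + 1) = b ^ (n + 1) * a + (n + 1) * b ^ n := by
  induction n with
  | zero => simpa using h
  | succ n ih =>
    rw [pow_succ, ← mul_assoc, ih, add_mul, mul_assoc, h]
    push_cast
    simp only [mul_add, add_mul, mul_one, one_mul, mul_assoc, pow_succ]
    abel

end Weyl

namespace LambdaSystem

open scoped Nat

local notation "𝒫" => MvPolynomial ℕ ℂ

def weight (k : ℕ) : ℕ := if k = 0 then 1 else k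

theorem weight_ne_zero (k : ℕ) : weight k ≠ 0 := by
  unfold weight
  split_ifs <;> omega

noncomputable def raise (β : ℂ) : Module.End ℂ 𝒫 :=
  LinearMap.mulLeft ℂ (X 0 + C β * X 1) + Tx.toLinearMap

def IsSolution (α : ℂ) (P : 𝒫) : Prop :=
  ∀ k, 1 ≤ k → ((pderiv 0).toLinearMap ^ k) P = (k ! * α) • pderiv k P

theorem Tx_X (i : ℕ) : Tx (X i) = if i = 0 then 0 else X (i + 1) :=
  mkDerivation_X ℂ _ i

theorem pderiv_Tx (k : ℕ) (q : 𝒫) :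
    pderiv k (Tx q) = Tx (pderiv k q) + if 2 ≤ k then pderiv (k - 1) q else 0 := by
  have : ⁅(pderiv k : Derivation ℂ 𝒫 𝒫), Tx⁆ = if 2 ≤ k then pderiv (k - 1) else 0 := by
    refine derivation_ext fun i => ?_
    rw [Derivation.commutator_apply, Tx_X]
    rcases k with _ | _ | k <;> rcases i with _ | i <;>
      simp [Pi.single_apply, apply_ite (Tx : 𝒫 → _)]
  have := congr($this q)
  split_ifs at this ⊢ <;> simpa [Derivation.commutator_apply, sub_eq_iff_eq_add'] using this

theorem raise_apply (β : ℂ) (q : 𝒫) :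
    raise β q = (X 0 + C β * X 1) * q + Tx q := by
  simp only [raise, LinearMap.add_apply, LinearMap.mulLeft_apply, Derivation.coeFn_coe]

theorem pderiv_zero_raise (β : ℂ) (q : 𝒫) :
    pderiv 0 (raise β q) = raise β (pderiv 0 q) + q := by
  simp only [raise_apply, map_add, pderiv_mul, pderiv_Tx, pderiv_C, pderiv_X_self,
    pderiv_X_of_ne one_ne_zero, if_neg (by omega : ¬2 ≤ 0)]
  ring

theorem pderiv_one_raise (β : ℂ) (q : 𝒫) :
    pderiv 1 (raise β q) = raise β (pderiv 1 q) + C β * q := by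
  simp only [raise_apply, map_add, pderiv_mul, pderiv_Tx, pderiv_C, pderiv_X_self,
    pderiv_X_of_ne zero_ne_one, if_neg (by omega : ¬2 ≤ 1)]
  ring

theorem pderiv_raise_of_two_le (β : ℂ) {k : ℕ} (hk : 2 ≤ k) (q : 𝒫) :
    pderiv k (raise β q) = raise β (pderiv k q) + pderiv (k - 1) q := by
  simp only [raise_apply, map_add, pderiv_mul, pderiv_Tx, pderiv_C,
    pderiv_X_of_ne (by omega : 0 ≠ k), pderiv_X_of_ne (by omega : 1 ≠ k), if_pos hk]
  ring

theorem pderiv_zero_mul_raise (β : ℂ) :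
    (pderiv 0).toLinearMap * raise β = raise β * (pderiv 0).toLinearMap + 1 := by
  refine LinearMap.ext fun q => ?_
  simp only [Module.End.mul_apply, LinearMap.add_apply, Module.End.one_apply,
    Derivation.coeFn_coe, pderiv_zero_raise]

theorem isSolution_raise_pow {α β : ℂ} (hαβ : α * β = 1) (d : ℕ) :
    IsSolution α ((raise β ^ d) 1) := by
  induction d with
  | zero =>
    intro k hk
    obtain ⟨m, rfl⟩ := Nat.exists_eq_add_of_le' hk
    simp [pow_succ]
  | succ d ih =>
    intro k hk
    obtain ⟨m, rfl⟩ := Nat.exists_eq_add_of_le' hk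
    rw [pow_succ' (raise β), Module.End.mul_apply, ← Module.End.mul_apply (_ ^ (m + 1)),
      pow_succ_mul_eq_of_mul_eq (pderiv_zero_mul_raise β) m]
    simp only [LinearMap.add_apply, Module.End.mul_apply, Module.End.natCast_apply,
      Module.End.one_apply, ih _ hk, map_smul]
    rcases m with _ | m
    · rw [pderiv_one_raise]
      simp [← smul_eq_C_mul, smul_smul, hαβ]
    · rw [pderiv_raise_of_two_le β (by omega), ih _ (Nat.le_add_left 1 m),
        Nat.factorial_succ (m + 1)]
      push_cast
      module

theorem pderiv_zero_raise_pow_succ (β : ℂ) (d : ℕ) :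
    pderiv 0 ((raise β ^ (d + 1)) 1) = (d + 1 : ℂ) • (raise β ^ d) 1 := by
  have := congr($(mul_pow_succ_eq_of_mul_eq (pderiv_zero_mul_raise β) d) 1)
  simp only [Module.End.mul_apply, LinearMap.add_apply, Module.End.natCast_apply,
    Derivation.coeFn_coe, pderiv_one, map_zero, zero_add, Module.End.one_apply] at this
  rwa [add_smul, one_smul, Nat.cast_smul_eq_nsmul]

theorem isWeightedHomogeneous_Tx {p : 𝒫} {n : ℕ} (hp : p.IsWeightedHomogeneous weight n) :
    (Tx p).IsWeightedHomogeneous weight (n + 1) :=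
  hp.derivation fun i => by
    rw [Tx_X]
    split_ifs with hi
    · exact isWeightedHomogeneous_zero ℂ weight _
    · simpa [weight, hi] using isWeightedHomogeneous_X ℂ weight (i + 1)

theorem isWeightedHomogeneous_raise (β : ℂ) {p : 𝒫} {n : ℕ}
    (hp : p.IsWeightedHomogeneous weight n) :
    (raise β p).IsWeightedHomogeneous weight (n + 1) := by
  have hL : (X 0 + C β * X 1 : 𝒫).IsWeightedHomogeneous weight 1 :=
    (isWeightedHomogeneous_X ℂ weight 0).add ((isWeightedHomogeneous_X ℂ weight 1).C_mul β)
  rw [raise_apply, add_comm n]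
  exact (hL.mul hp).add (add_comm n 1 ▸ isWeightedHomogeneous_Tx hp)

theorem isWeightedHomogeneous_raise_pow (β : ℂ) (d : ℕ) :
    ((raise β ^ d) 1).IsWeightedHomogeneous weight d := by
  induction d with
  | zero => exact isWeightedHomogeneous_one ℂ weight
  | succ d ih =>
    rw [pow_succ', Module.End.mul_apply]
    exact isWeightedHomogeneous_raise β ih

variable {α : ℂ} {P Q : 𝒫}

theorem IsSolution.sub (hP : IsSolution α P) (hQ : IsSolution α Q) : IsSolution α (P - Q) :=
  fun k hk => by rw [map_sub, hP k hk, hQ k hk, map_sub, smul_sub]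

theorem IsSolution.smul (hP : IsSolution α P) (c : ℂ) : IsSolution α (c • P) :=
  fun k hk => by rw [map_smul, hP k hk, Derivation.map_smul, smul_comm]

theorem IsSolution.pderiv_zero (hP : IsSolution α P) : IsSolution α (pderiv 0 P) :=
  fun k hk => by
  have := congr_arg (pderiv 0) (hP k hk)
  rw [Derivation.map_smul, pderiv_pderiv_comm] at this
  rw [← this, ← Derivation.coeFn_coe, ← Module.End.mul_apply, ← Module.End.mul_apply,
    pow_mul_comm']

theorem IsSolution.eq_zero_of_pderiv_zero (hα : α ≠ 0) (hP : IsSolution α P)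
    (h0 : pderiv 0 P = 0) {n : ℕ} (hhom : P.IsWeightedHomogeneous weight n) (hn : n ≠ 0) :
    P = 0 := by
  have hall : ∀ k, pderiv k P = 0 := by
    intro k
    rcases k with _ | m
    · exact h0
    have := hP (m + 1) m.succ_pos
    rw [pow_succ, Module.End.mul_apply, Derivation.coeFn_coe, h0, map_zero, eq_comm,
      smul_eq_zero] at this
    exact this.resolve_left (mul_ne_zero (Nat.cast_ne_zero.mpr (Nat.factorial_ne_zero _)) hα)
  rw [eq_C_of_forall_pderiv_eq_zero hall] at hhom ⊢
  by_contra hne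
  exact hn ((isWeightedHomogeneous_C weight _).inj_right hne hhom).symm

theorem IsSolution.exists_eq_smul_raise_pow {β : ℂ} (hαβ : α * β = 1) {d : ℕ}
    (hP : P.IsWeightedHomogeneous weight d) (hsol : IsSolution α P) :
    ∃ δ : ℂ, P = δ • (raise β ^ d) 1 := by
  induction d generalizing P with
  | zero =>
    refine ⟨P.coeff 0, ?_⟩
    rw [pow_zero, Module.End.one_apply, smul_eq_C_mul, mul_one,
      ← weightedHomogeneousComponent_zero P weight_ne_zero, hP.weightedHomogeneousComponent_same]
  | succ d ih =>
    obtain ⟨δ, hδ⟩ := ih (hP.pderiv rfl) hsol.pderiv_zero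
    refine ⟨δ / (d + 1), sub_eq_zero.mp ?_⟩
    refine (hsol.sub ((isSolution_raise_pow hαβ _).smul _)).eq_zero_of_pderiv_zero
      (left_ne_zero_of_mul_eq_one hαβ) ?_ (hP.sub ?_) d.succ_ne_zero
    · rw [map_sub, Derivation.map_smul, pderiv_zero_raise_pow_succ, hδ, smul_smul,
        div_mul_cancel₀ _ (Nat.cast_add_one_ne_zero d), sub_self]
    · rw [smul_eq_C_mul]
      exact (isWeightedHomogeneous_raise_pow β _).C_mul _

theorem isSolution_zero_iff : IsSolution 0 P ↔ pderiv 0 P = 0 := by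
  refine ⟨fun h => by simpa using h 1 le_rfl, fun h k hk => ?_⟩
  obtain ⟨m, rfl⟩ := Nat.exists_eq_add_of_le' hk
  rw [pow_succ, Module.End.mul_apply, Derivation.coeFn_coe, h, map_zero, mul_zero, zero_smul]

theorem system_iff_isSolution (α : ℂ) (P : 𝒫) :
    (∀ k : ℕ, 1 ≤ k →
      C ((k ! : ℂ)⁻¹) * (fun q => pderiv 0 q)^[k] P = C α * pderiv k P) ↔ IsSolution α P := by
  refine forall₂_congr fun k _ => ?_
  rw [← smul_eq_C_mul, ← smul_eq_C_mul,
    inv_smul_eq_iff₀ (Nat.cast_ne_zero.mpr k.factorial_ne_zero), smul_smul, Module.End.pow_apply]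
  rfl

end LambdaSystem

open LambdaSystem in
/-- (a) For `α = 0`, the system `(1/k!) ∂ᵏP/∂λᵏ = α ∂P/∂x_k (k ≥ 1)` holds iff `P` is
independent of `λ`.  (b) For `α ≠ 0`, `β = 1/α`, and `P` homogeneous of degree `d ≥ 1`
(for `deg λ = 1`, `deg x_k = k`), the system holds iff `P = δ·(M_λ + T + β·M_{x₁})^d(1)`
for some `δ ∈ ℂ`. -/
theorem stmt11 (α : ℂ) (P : MvPolynomial ℕ ℂ) :
    (α = 0 →
      ((∀ k : ℕ, 1 ≤ k →
          C ((k.factorial : ℂ)⁻¹) * (fun q => pderiv 0 q)^[k] P = C α * pderiv k P)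
        ↔ P ∈ MvPolynomial.supported ℂ {k : ℕ | k ≠ 0}))
    ∧ ∀ β : ℂ, ∀ d : ℕ, α ≠ 0 → β = 1 / α → 1 ≤ d →
        P.IsWeightedHomogeneous (fun k => if k = 0 then 1 else k) d →
        ((∀ k : ℕ, 1 ≤ k →
            C ((k.factorial : ℂ)⁻¹) * (fun q => pderiv 0 q)^[k] P = C α * pderiv k P)
          ↔ ∃ δ : ℂ,
              P = C δ * (fun q => X 0 * q + Tx q + C β * (X 1 * q))^[d] 1) := by
  rw [system_iff_isSolution]
  refine ⟨fun hα => ?_, fun β d hα hβ _ hP => ?_⟩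
  · rw [hα, isSolution_zero_iff, pderiv_eq_zero_iff_notMem_vars, mem_supported]
    simp [Set.subset_def]
  · have hαβ : α * β = 1 := by rw [hβ, mul_one_div_cancel hα]
    have hraise : (fun q => X 0 * q + Tx q + C β * (X 1 * q)) = raise β := by
      ext1 q; rw [raise_apply]; ring
    rw [hraise, ← Module.End.pow_apply]
    simp only [← smul_eq_C_mul]
    exact ⟨fun h => h.exists_eq_smul_raise_pow hαβ hP,
      fun ⟨δ, hδ⟩ => hδ ▸ (isSolution_raise_pow hαβ d).smul δ⟩
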